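/- arXiv:math/0501475 — 8 statements merged into one kernel-verified Lean document; each statement's English description precedes it below -/
import Mathlib

section
/- Define F : Σ₂ → Σ₂ by F(x)_n = x_{n+2} + x_n(1 + x_{n+1})x_{n+3}, with arithmetic in the field 𝔽₂ of two elements. Then F is an automorphism of the full two-sided 2-shift: F is a bijection of Σ₂, F and its inverse are continuous, and F ∘ σ = σ ∘ F. -/
/-- The full two-sided 2-shift space: bi-infinite sequences over the field `𝔽₂`,
with the product topology (each factor discrete). -/
abbrev Sigma2 : Type := ℤ → ZMod 2

/-- The shift map `σ` on `Σ₂`: `(σ x) n = x (n+1)`. -/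
def shiftMap (x : Sigma2) : Sigma2 := fun n => x (n + 1)

/-- Brown's map `F(x)_n = x_{n+2} + x_n (1 + x_{n+1}) x_{n+3}` (arithmetic in `𝔽₂`). -/
def brownF (x : Sigma2) : Sigma2 :=
  fun n => x (n + 2) + x n * (1 + x (n + 1)) * x (n + 3)

/-!
`F = H ∘ σ²`, where `H(x)_n = x_n + x_{n-2} (1 + x_{n-1}) x_{n+1}` flips `x_n` exactly when
`x_{n-2} x_{n-1} _ x_{n+1}` reads `1 0 _ 1`. Applying `H` does not change which coordinates satisfy
this condition, so `H` is a continuous involution, hence a homeomorphism, and so is `F`.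
-/

def brownH (x : Sigma2) : Sigma2 :=
  fun n => x n + x (n - 2) * (1 + x (n - 1)) * x (n + 1)

-- `brownH (brownH x) n` for `(a, …, g) = (x (n-4), …, x (n+2))`.
theorem brownH_brownH_local (a b c d e f g : ZMod 2) :
    (e + c * (1 + d) * f) +
      (c + a * (1 + b) * d) * (1 + (d + b * (1 + c) * e)) * (f + d * (1 + e) * g) = e := by
  revert a b c d e f g
  decide

theorem brownH_involutive : Function.Involutive brownH := by
  intro x
  funext n
  simp only [brownH, show n - 2 - 2 = n - 4 by ring, show n - 2 - 1 = n - 3 by ring,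
    show n - 2 + 1 = n - 1 by ring, show n - 1 - 2 = n - 3 by ring, show n - 1 - 1 = n - 2 by ring,
    show n - 1 + 1 = n by ring, show n + 1 - 2 = n - 1 by ring, show n + 1 - 1 = n by ring,
    show n + 1 + 1 = n + 2 by ring]
  exact brownH_brownH_local (x (n - 4)) (x (n - 3)) (x (n - 2)) (x (n - 1)) (x n) (x (n + 1))
    (x (n + 2))

theorem continuous_brownH : Continuous brownH :=
  continuous_pi fun n => by unfold brownH; fun_prop

def brownHHomeomorph : Sigma2 ≃ₜ Sigma2 where
  toEquiv := brownH_involutive.toPerm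
  continuous_toFun := continuous_brownH
  continuous_invFun := continuous_brownH

def shiftHomeomorph : Sigma2 ≃ₜ Sigma2 where
  toFun := shiftMap
  invFun x n := x (n - 1)
  left_inv x := by funext n; simp [shiftMap]
  right_inv x := by funext n; simp [shiftMap]
  continuous_toFun := continuous_pi fun n => continuous_apply (n + 1)
  continuous_invFun := continuous_pi fun n => continuous_apply (n - 1)

theorem brownF_eq_brownH_shiftMap_shiftMap (x : Sigma2) :
    brownF x = brownH (shiftMap (shiftMap x)) := by
  funext n
  simp only [brownF, brownH, shiftMap, show n + 1 + 1 = n + 2 by ring,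
    show n - 2 + 1 + 1 = n by ring, show n - 1 + 1 + 1 = n + 1 by ring,
    show n + 2 + 1 = n + 3 by ring]

theorem brownF_shiftMap (x : Sigma2) : brownF (shiftMap x) = shiftMap (brownF x) := by
  funext n
  simp only [brownF, shiftMap, add_right_comm n 2 1, add_right_comm n 3 1]

/-- Brown's map `F` is an automorphism of the full two-sided 2-shift: it is a
bijection of `Σ₂`, it and its inverse are continuous (i.e. it extends to a
self-homeomorphism of `Σ₂`), and it commutes with the shift `σ`. -/
theorem brownF_is_shift_automorphism :
    ∃ e : Sigma2 ≃ₜ Sigma2,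
      (∀ x : Sigma2, e x = brownF x) ∧
      (∀ x : Sigma2, e (shiftMap x) = shiftMap (e x)) := by
  let e := (shiftHomeomorph.trans shiftHomeomorph).trans brownHHomeomorph
  have he : ∀ x, e x = brownF x := fun x => (brownF_eq_brownH_shiftMap_shiftMap x).symm
  exact ⟨e, he, fun x => by rw [he, he, brownF_shiftMap]⟩
end

section
/- Let Aut(Σ₂) be the group of self-homeomorphisms of Σ₂ commuting with σ. Let X = {w^∞ : w ∈ {0001, 1110, 0011, 1100, 1011, 0100}} and Y = {w^∞ : w ∈ {0010, 1101, 0110, 1001, 0111, 1000}}. Let C ∈ Aut(Σ₂) be the symbol interchange C(x)_n = 1 + x_n (in 𝔽₂), and let F be Brown's automorphism F(x)_n = x_{n+2} + x_n(1 + x_{n+1})x_{n+3} (in 𝔽₂). Then F does not belong to the subgroup of Aut(Σ₂) generated by σ, C, and the set of all g ∈ Aut(Σ₂) satisfying g(X) = X and g(Y) = Y. -/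
/-- The shift map `σ` on `Σ₂`, as a bijection. -/
def shiftPerm : Equiv.Perm Sigma2 where
  toFun x := fun n => x (n + 1)
  invFun x := fun n => x (n - 1)
  left_inv x := funext fun n => congrArg x (by ring)
  right_inv x := funext fun n => congrArg x (by ring)

/-- The symbol-interchange `C(x)_n = 1 + x_n` (arithmetic in `𝔽₂`), as a bijection. -/
def interchangePerm : Equiv.Perm Sigma2 where
  toFun x := fun n => 1 + x n
  invFun x := fun n => 1 + x n
  left_inv x := funext fun n => by
    show 1 + (1 + x n) = x n
    rw [← add_assoc, show (1 : ZMod 2) + 1 = 0 from rfl, zero_add]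
  right_inv x := funext fun n => by
    show 1 + (1 + x n) = x n
    rw [← add_assoc, show (1 : ZMod 2) + 1 = 0 from rfl, zero_add]

/-- A bijection of `Σ₂` is an automorphism of the 2-shift if it and its inverse are
continuous and it commutes with the shift `σ`. -/
def IsShiftAut (g : Equiv.Perm Sigma2) : Prop :=
  Continuous g ∧ Continuous g.symm ∧ ∀ x, g (shiftPerm x) = shiftPerm (g x)

/-- For a word `w = w₀w₁w₂w₃` of length four, the periodic sequence `w^∞ ∈ Σ₂`. -/
def perWord (w : Fin 4 → ZMod 2) : Sigma2 :=
  fun n => w ⟨(n % 4).toNat, by omega⟩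

def Xset : Set Sigma2 :=
  {perWord ![0,0,0,1], perWord ![1,1,1,0], perWord ![0,0,1,1],
   perWord ![1,1,0,0], perWord ![1,0,1,1], perWord ![0,1,0,0]}

def Yset : Set Sigma2 :=
  {perWord ![0,0,1,0], perWord ![1,1,0,1], perWord ![0,1,1,0],
   perWord ![1,0,0,1], perWord ![0,1,1,1], perWord ![1,0,0,0]}

lemma perWord_mk (w : Fin 4 → ZMod 2) (n : ℤ) (k : ℕ) (h4 : k < 4)
    (hk : (n % 4).toNat = k) : perWord w n = w ⟨k, h4⟩ := by
  simp only [perWord, hk]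

lemma perWord_inj {w w' : Fin 4 → ZMod 2} (h : perWord w = perWord w') : w = w' := by
  funext i
  have := congrFun h (i.val : ℤ)
  rw [perWord_mk w _ i.val i.isLt (by omega), perWord_mk w' _ i.val i.isLt (by omega)] at this
  simpa using this

lemma shift_perWord (w w' : Fin 4 → ZMod 2)
    (h : ∀ i : Fin 4, w' i = w (i + 1)) : shiftPerm (perWord w) = perWord w' := by
  funext n
  show perWord w (n + 1) = perWord w' n
  rcases (by omega : n % 4 = 0 ∨ n % 4 = 1 ∨ n % 4 = 2 ∨ n % 4 = 3) with h0|h0|h0|h0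
  · rw [perWord_mk w' n 0 (by omega) (by omega), perWord_mk w _ 1 (by omega) (by omega), h]; rfl
  · rw [perWord_mk w' n 1 (by omega) (by omega), perWord_mk w _ 2 (by omega) (by omega), h]; rfl
  · rw [perWord_mk w' n 2 (by omega) (by omega), perWord_mk w _ 3 (by omega) (by omega), h]; rfl
  · rw [perWord_mk w' n 3 (by omega) (by omega), perWord_mk w _ 0 (by omega) (by omega), h]; rfl

lemma inter_perWord (w w' : Fin 4 → ZMod 2)
    (h : ∀ i : Fin 4, w' i = 1 + w i) : interchangePerm (perWord w) = perWord w' := by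
  funext n
  show 1 + perWord w n = perWord w' n
  simp only [perWord, h]

lemma F_perWord (F : Equiv.Perm Sigma2)
    (hF : ∀ (x : Sigma2) (n : ℤ),
      F x n = x (n + 2) + x n * (1 + x (n + 1)) * x (n + 3))
    (w w' : Fin 4 → ZMod 2)
    (h : ∀ i : Fin 4, w' i = w (i + 2) + w i * (1 + w (i + 1)) * w (i + 3)) :
    F (perWord w) = perWord w' := by
  funext n
  rw [hF]
  rcases (by omega : n % 4 = 0 ∨ n % 4 = 1 ∨ n % 4 = 2 ∨ n % 4 = 3) with h0|h0|h0|h0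
  · rw [perWord_mk w' n 0 (by omega) (by omega), perWord_mk w (n+2) 2 (by omega) (by omega),
      perWord_mk w n 0 (by omega) (by omega), perWord_mk w (n+1) 1 (by omega) (by omega),
      perWord_mk w (n+3) 3 (by omega) (by omega), h]; rfl
  · rw [perWord_mk w' n 1 (by omega) (by omega), perWord_mk w (n+2) 3 (by omega) (by omega),
      perWord_mk w n 1 (by omega) (by omega), perWord_mk w (n+1) 2 (by omega) (by omega),
      perWord_mk w (n+3) 0 (by omega) (by omega), h]; rfl
  · rw [perWord_mk w' n 2 (by omega) (by omega), perWord_mk w (n+2) 0 (by omega) (by omega),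
      perWord_mk w n 2 (by omega) (by omega), perWord_mk w (n+1) 3 (by omega) (by omega),
      perWord_mk w (n+3) 1 (by omega) (by omega), h]; rfl
  · rw [perWord_mk w' n 3 (by omega) (by omega), perWord_mk w (n+2) 1 (by omega) (by omega),
      perWord_mk w n 3 (by omega) (by omega), perWord_mk w (n+1) 0 (by omega) (by omega),
      perWord_mk w (n+3) 2 (by omega) (by omega), h]; rfl

/-- The subgroup of permutations that either preserve both `X` and `Y`, or swap them. -/
def goodSubgroup : Subgroup (Equiv.Perm Sigma2) where
  carrier := {g | (⇑g '' Xset = Xset ∧ ⇑g '' Yset = Yset) ∨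
                  (⇑g '' Xset = Yset ∧ ⇑g '' Yset = Xset)}
  one_mem' := by
    left
    constructor <;> simp
  mul_mem' := by
    rintro a b (⟨ha1, ha2⟩|⟨ha1, ha2⟩) (⟨hb1, hb2⟩|⟨hb1, hb2⟩) <;>
      [left; right; right; left] <;>
      constructor <;>
      simp only [Equiv.Perm.coe_mul, Set.image_comp, hb1, hb2, ha1, ha2]
  inv_mem' := by
    have key : ∀ (g : Equiv.Perm Sigma2) (A B : Set Sigma2),
        ⇑g '' A = B → ⇑g⁻¹ '' B = A := by
      intro g A B h
      rw [← h]
      exact g.symm_image_image A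
    rintro g (⟨h1, h2⟩|⟨h1, h2⟩)
    · exact Or.inl ⟨key g _ _ h1, key g _ _ h2⟩
    · exact Or.inr ⟨key g _ _ h2, key g _ _ h1⟩

lemma shift_mem_good : shiftPerm ∈ goodSubgroup := by
  right
  constructor
  · simp only [Xset, Set.image_insert_eq, Set.image_singleton,
      shift_perWord ![0,0,0,1] ![0,0,1,0] (by decide),
      shift_perWord ![1,1,1,0] ![1,1,0,1] (by decide),
      shift_perWord ![0,0,1,1] ![0,1,1,0] (by decide),
      shift_perWord ![1,1,0,0] ![1,0,0,1] (by decide),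
      shift_perWord ![1,0,1,1] ![0,1,1,1] (by decide),
      shift_perWord ![0,1,0,0] ![1,0,0,0] (by decide), Yset]
  · simp only [Yset, Set.image_insert_eq, Set.image_singleton,
      shift_perWord ![0,0,1,0] ![0,1,0,0] (by decide),
      shift_perWord ![1,1,0,1] ![1,0,1,1] (by decide),
      shift_perWord ![0,1,1,0] ![1,1,0,0] (by decide),
      shift_perWord ![1,0,0,1] ![0,0,1,1] (by decide),
      shift_perWord ![0,1,1,1] ![1,1,1,0] (by decide),
      shift_perWord ![1,0,0,0] ![0,0,0,1] (by decide), Xset]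
    ext x
    simp only [Set.mem_insert_iff, Set.mem_singleton_iff]
    tauto

lemma inter_mem_good : interchangePerm ∈ goodSubgroup := by
  left
  constructor
  · simp only [Xset, Set.image_insert_eq, Set.image_singleton,
      inter_perWord ![0,0,0,1] ![1,1,1,0] (by decide),
      inter_perWord ![1,1,1,0] ![0,0,0,1] (by decide),
      inter_perWord ![0,0,1,1] ![1,1,0,0] (by decide),
      inter_perWord ![1,1,0,0] ![0,0,1,1] (by decide),
      inter_perWord ![1,0,1,1] ![0,1,0,0] (by decide),
      inter_perWord ![0,1,0,0] ![1,0,1,1] (by decide)]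
    ext x
    simp only [Set.mem_insert_iff, Set.mem_singleton_iff]
    tauto
  · simp only [Yset, Set.image_insert_eq, Set.image_singleton,
      inter_perWord ![0,0,1,0] ![1,1,0,1] (by decide),
      inter_perWord ![1,1,0,1] ![0,0,1,0] (by decide),
      inter_perWord ![0,1,1,0] ![1,0,0,1] (by decide),
      inter_perWord ![1,0,0,1] ![0,1,1,0] (by decide),
      inter_perWord ![0,1,1,1] ![1,0,0,0] (by decide),
      inter_perWord ![1,0,0,0] ![0,1,1,1] (by decide)]
    ext x
    simp only [Set.mem_insert_iff, Set.mem_singleton_iff]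
    tauto

/-- Brown's automorphism `F` (i.e. any bijection of `Σ₂` given by the formula
`F(x)_n = x_{n+2} + x_n (1 + x_{n+1}) x_{n+3}`) does not belong to the subgroup of
`Aut(Σ₂)` generated by the shift `σ`, the symbol interchange `C`, and all shift
automorphisms `g` with `g(X) = X` and `g(Y) = Y`. -/
theorem brownF_not_in_subgroup (F : Equiv.Perm Sigma2)
    (hF : ∀ (x : Sigma2) (n : ℤ),
      F x n = x (n + 2) + x n * (1 + x (n + 1)) * x (n + 3)) :
    F ∉ Subgroup.closure
      ({shiftPerm, interchangePerm} ∪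
        {g : Equiv.Perm Sigma2 | IsShiftAut g ∧ ⇑g '' Xset = Xset ∧ ⇑g '' Yset = Yset}) := by
  intro hmem
  have hsub : ({shiftPerm, interchangePerm} ∪
      {g : Equiv.Perm Sigma2 | IsShiftAut g ∧ ⇑g '' Xset = Xset ∧ ⇑g '' Yset = Yset})
      ⊆ (goodSubgroup : Set (Equiv.Perm Sigma2)) := by
    rintro g (hg | hg)
    · rcases hg with rfl | hg
      · exact shift_mem_good
      · rw [Set.mem_singleton_iff] at hg
        subst hg
        exact inter_mem_good
    · exact Or.inl hg.2
  have hgood : F ∈ goodSubgroup := (Subgroup.closure_le goodSubgroup).2 hsub hmem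
  have ha : F (perWord ![0,0,0,1]) = perWord ![0,1,0,0] :=
    F_perWord F hF _ _ (by decide)
  have hb : F (perWord ![0,0,1,1]) = perWord ![1,1,0,1] :=
    F_perWord F hF _ _ (by decide)
  rcases hgood with ⟨h1, _⟩ | ⟨h1, _⟩
  · -- F preserves X, but F sends 0011^∞ ∈ X to 1101^∞ ∉ X
    have : perWord ![1,1,0,1] ∈ Xset := by
      rw [← h1]
      exact ⟨perWord ![0,0,1,1], by simp [Xset], hb⟩
    simp only [Xset, Set.mem_insert_iff, Set.mem_singleton_iff] at this
    rcases this with h|h|h|h|h|h <;> exact absurd (perWord_inj h) (by decide)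
  · -- F swaps X and Y, but F sends 0001^∞ ∈ X to 0100^∞ ∉ Y
    have : perWord ![0,1,0,0] ∈ Yset := by
      rw [← h1]
      exact ⟨perWord ![0,0,0,1], by simp [Xset], ha⟩
    simp only [Yset, Set.mem_insert_iff, Set.mem_singleton_iff] at this
    rcases this with h|h|h|h|h|h <;> exact absurd (perWord_inj h) (by decide)
end

section
/- For all a, b ∈ ℂ with b ≠ 0, the set K_{a,b} of points of ℂ² with bounded full orbit under the Hénon map f_{a,b} is contained in the closed polydisk {(x,y) ∈ ℂ² : max(|x|, |y|) ≤ R}, where R = ((1+|b|) + √((1+|b|)² + 4|a|))/2. In particular K_{a,b} is a bounded subset of ℂ². -/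
noncomputable section

/-- The complex Hénon map `f_{a,b}(x,y) = (x² + a − b y, x)`. -/
def henonMap (a b : ℂ) : ℂ × ℂ → ℂ × ℂ :=
  fun p => (p.1 ^ 2 + a - b * p.2, p.1)

/-- For `b ≠ 0`, the Hénon map `f_{a,b}` as a bijection of `ℂ²`. -/
def henon (a b : ℂ) (hb : b ≠ 0) : Equiv.Perm (ℂ × ℂ) where
  toFun := henonMap a b
  invFun p := (p.2, (p.2 ^ 2 + a - p.1) / b)
  left_inv p := by
    obtain ⟨x, y⟩ := p
    simp only [henonMap]
    refine Prod.ext rfl ?_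
    field_simp
    ring
  right_inv p := by
    obtain ⟨x, y⟩ := p
    simp only [henonMap]
    refine Prod.ext ?_ rfl
    field_simp
    ring

/-- `K_{a,b}`: the set of points of `ℂ²` whose full orbit under `f_{a,b}` is bounded. -/
def henonK (a b : ℂ) (hb : b ≠ 0) : Set (ℂ × ℂ) :=
  {p | Bornology.IsBounded (Set.range fun n : ℤ => ((henon a b hb) ^ n) p)}

end

/-!
Put `c = 1 + |b|`. The radius `R` is the positive root of `t² - c t - |a|`, so `g(t) = t² - c t - |a|`
is positive and increasing for `t > R`. If `|y| ≤ |x|` and `|x| > R`, the triangle inequality gives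
`|x'| ≥ |x|² - |a| - |b| |y| ≥ |x| + g(|x|)` for `(x', y') = f(x, y)`, and `y' = x`; so the region
`|y| ≤ |x|, |x| ≥ |x₀|` is forward invariant and `|x|` grows by at least `g(|x₀|) > 0` per step: the
forward orbit escapes. Since `f⁻¹(x, y) = (y, (y² + a - x)/b)`, the same estimate with the roles of
the coordinates exchanged (`|b| |y'| ≥ |y|² - |a| - |x|`) makes the backward orbit escape when
`|x| ≤ |y|` and `|y| > R`.
-/

open Set Filter

/-- The positive root of `t² - c t - A`. -/
noncomputable def escapeRadius (c A : ℝ) : ℝ := (c + √(c ^ 2 + 4 * A)) / 2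

lemma half_le_escapeRadius (c A : ℝ) : c / 2 ≤ escapeRadius c A := by
  have := Real.sqrt_nonneg (c ^ 2 + 4 * A)
  unfold escapeRadius
  linarith

lemma sq_sub_mul_sub_pos_of_escapeRadius_lt {c A t : ℝ} (hA : 0 ≤ A) (ht : escapeRadius c A < t) :
    0 < t ^ 2 - c * t - A := by
  have hS := Real.sq_sqrt (by positivity : 0 ≤ c ^ 2 + 4 * A)
  have hS0 := Real.sqrt_nonneg (c ^ 2 + 4 * A)
  unfold escapeRadius at ht
  nlinarith

lemma tendsto_iterate_atTop_of_add_le {X : Type*} {T : X → X} {V : Set X} {h : X → ℝ} {δ : ℝ}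
    (hT : MapsTo T V V) (hstep : ∀ q ∈ V, h q + δ ≤ h (T q)) (hδ : 0 < δ) {p : X} (hp : p ∈ V) :
    Tendsto (fun n : ℕ => h (T^[n] p)) atTop atTop := by
  have hlin : ∀ n : ℕ, h p + n * δ ≤ h (T^[n] p) := by
    intro n
    induction n with
    | zero => simp
    | succ n ih =>
      rw [Function.iterate_succ_apply']
      have := hstep _ (hT.iterate n hp)
      push_cast
      linarith
  refine tendsto_atTop_mono hlin (tendsto_atTop_add_const_left _ _ ?_)
  exact tendsto_natCast_atTop_atTop.atTop_mul_const hδ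

/-- Stated for an abstract map so that it covers both `f` and `f⁻¹`: `u` is the coordinate that
grows and `v` the one that is shifted into it. -/
theorem tendsto_iterate_atTop_of_sq_le {X : Type*} (F : X → X) (u v : X → ℝ) {β γ A : ℝ}
    (hβ : 0 < β) (hγ : 0 ≤ γ) (hA : 0 ≤ A) (hv : ∀ q, v (F q) = u q)
    (hu : ∀ q, u q ^ 2 - A - γ * v q ≤ β * u (F q)) {p : X} (hvu : v p ≤ u p)
    (hR : escapeRadius (β + γ) A < u p) :
    Tendsto (fun n : ℕ => u (F^[n] p)) atTop atTop := by
  set r := u p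
  set δ := (r ^ 2 - (β + γ) * r - A) / β
  have hδ : 0 < δ := div_pos (sq_sub_mul_sub_pos_of_escapeRadius_lt hA hR) hβ
  have hr : (β + γ) / 2 ≤ r := (half_le_escapeRadius _ _).trans hR.le
  have hstep : ∀ q ∈ {q | v q ≤ u q ∧ r ≤ u q}, u q + δ ≤ u (F q) := by
    rintro q ⟨hvq, hrq⟩
    have hmono : 0 ≤ (u q - r) * (u q + r - (β + γ)) := by
      apply mul_nonneg <;> linarith
    have hβδ : β * δ = r ^ 2 - (β + γ) * r - A := mul_div_cancel₀ _ hβ.ne'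
    have hγv := mul_le_mul_of_nonneg_left hvq hγ
    have := hu q
    nlinarith
  refine tendsto_iterate_atTop_of_add_le ?_ hstep hδ ⟨hvu, le_rfl⟩
  rintro q hq
  have := hstep q hq
  exact ⟨(hv q).trans_le (by linarith), hq.2.trans (by linarith)⟩

section Henon

variable {a b : ℂ} {hb : b ≠ 0}

lemma norm_sq_sub_le_norm_henon_fst (q : ℂ × ℂ) :
    ‖q.1‖ ^ 2 - ‖a‖ - ‖b‖ * ‖q.2‖ ≤ ‖(henon a b hb q).1‖ := by
  have h : q.1 ^ 2 = (henon a b hb q).1 + -a + b * q.2 := by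
    simp only [henon, Equiv.coe_fn_mk, henonMap]
    ring
  have := norm_add₃_le (a := (henon a b hb q).1) (b := -a) (c := b * q.2)
  rw [← h, norm_pow, norm_neg, norm_mul] at this
  linarith

lemma norm_sq_sub_le_norm_henon_symm_snd (q : ℂ × ℂ) :
    ‖q.2‖ ^ 2 - ‖a‖ - ‖q.1‖ ≤ ‖b‖ * ‖((henon a b hb).symm q).2‖ := by
  have h : q.2 ^ 2 = b * ((henon a b hb).symm q).2 + -a + q.1 := by
    change q.2 ^ 2 = b * ((q.2 ^ 2 + a - q.1) / b) + -a + q.1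
    field_simp
    ring
  have := norm_add₃_le (a := b * ((henon a b hb).symm q).2) (b := -a) (c := q.1)
  rw [← h, norm_pow, norm_neg, norm_mul] at this
  linarith

lemma exists_forall_norm_iterate_le_of_mem_henonK {p : ℂ × ℂ} (hp : p ∈ henonK a b hb) :
    ∃ M, ∀ n : ℕ, ‖(henon a b hb)^[n] p‖ ≤ M ∧ ‖(henon a b hb).symm^[n] p‖ ≤ M := by
  rw [henonK, mem_ofPred_eq, isBounded_iff_forall_norm_le] at hp
  obtain ⟨M, hM⟩ := hp
  rw [forall_mem_range] at hM
  refine ⟨M, fun n => ⟨?_, ?_⟩⟩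
  · rw [Equiv.Perm.iterate_eq_pow, ← zpow_natCast]
    exact hM _
  · rw [← Equiv.Perm.inv_def, Equiv.Perm.iterate_eq_pow, inv_pow, ← zpow_natCast, ← zpow_neg]
    exact hM _

theorem max_norm_le_escapeRadius_of_mem_henonK {p : ℂ × ℂ} (hp : p ∈ henonK a b hb) :
    max ‖p.1‖ ‖p.2‖ ≤ escapeRadius (1 + ‖b‖) ‖a‖ := by
  obtain ⟨M, hM⟩ := exists_forall_norm_iterate_le_of_mem_henonK hp
  by_contra! hR
  rcases le_total ‖p.2‖ ‖p.1‖ with h | h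
  · rw [max_eq_left h] at hR
    have hesc := tendsto_iterate_atTop_of_sq_le (henon a b hb) (‖·.1‖) (‖·.2‖) one_pos
      (norm_nonneg b) (norm_nonneg a) (fun _ => rfl)
      (fun q => by rw [one_mul]; exact norm_sq_sub_le_norm_henon_fst q) h hR
    obtain ⟨n, hn⟩ := (hesc.eventually_gt_atTop M).exists
    exact hn.not_ge ((norm_fst_le _).trans (hM n).1)
  · rw [max_eq_right h, add_comm] at hR
    have hesc := tendsto_iterate_atTop_of_sq_le (henon a b hb).symm (‖·.2‖) (‖·.1‖)
      (norm_pos_iff.mpr hb) zero_le_one (norm_nonneg a) (fun _ => rfl)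
      (fun q => by rw [one_mul]; exact norm_sq_sub_le_norm_henon_symm_snd q) h hR
    obtain ⟨n, hn⟩ := (hesc.eventually_gt_atTop M).exists
    exact hn.not_ge ((norm_snd_le _).trans (hM n).2)

end Henon

/-- `K_{a,b}` is contained in the closed polydisk of radius
`R = ((1+|b|) + √((1+|b|)² + 4|a|))/2`; in particular it is bounded. -/
theorem henonK_subset_polydisk (a b : ℂ) (hb : b ≠ 0) :
    (∀ p ∈ henonK a b hb,
      max ‖p.1‖ ‖p.2‖ ≤
        ((1 + ‖b‖) +
          Real.sqrt ((1 + ‖b‖) ^ 2 + 4 * ‖a‖)) / 2) ∧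
    Bornology.IsBounded (henonK a b hb) := by
  have hK : ∀ p ∈ henonK a b hb, max ‖p.1‖ ‖p.2‖ ≤ escapeRadius (1 + ‖b‖) ‖a‖ :=
    fun _ => max_norm_le_escapeRadius_of_mem_henonK
  refine ⟨hK, isBounded_iff_forall_norm_le.mpr ⟨escapeRadius (1 + ‖b‖) ‖a‖, fun p hp => ?_⟩⟩
  rw [Prod.norm_def]
  exact hK p hp
end

section
/- Let a, b ∈ ℝ with b ≠ 0 and a > 2(|b|+1)². Then K_{a,b} ∩ ℝ² = ∅; that is, no point of ℝ² has bounded full orbit under the Hénon map f_{a,b}. -/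
/-!
The real plane is invariant under `f_{a,b}` and its inverse, and along a two-sided real orbit the
first coordinates satisfy `x (n+1) = x n ^ 2 + a - b * x (n-1)`. If they were bounded, then
`M = sup |x n|` would give `x n ^ 2 + a = x (n+1) + b * x (n-1) ≤ (1 + |b|) M` for every `n`,
hence `M ^ 2 - (1 + |b|) M + a ≤ 0`, which forces `4 a ≤ (1 + |b|) ^ 2`.
-/

open Set

theorem four_mul_le_sq_of_bddAbove_of_recurrence {a b : ℝ} {x : ℤ → ℝ}
    (hbdd : BddAbove (range fun n => |x n|))
    (hrec : ∀ n, x (n + 1) = x n ^ 2 + a - b * x (n - 1)) :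
    4 * a ≤ (1 + |b|) ^ 2 := by
  set M := ⨆ n, |x n|
  have hle : ∀ n, |x n| ≤ M := le_ciSup hbdd
  have hsq : ∀ n, x n ^ 2 ≤ (1 + |b|) * M - a := by
    intro n
    have hb : b * x (n - 1) ≤ |b| * M :=
      (le_abs_self _).trans <| (abs_mul b _).trans_le <|
        mul_le_mul_of_nonneg_left (hle _) (abs_nonneg b)
    linarith [hrec n, (le_abs_self _).trans (hle (n + 1))]
  have hM : M ^ 2 ≤ (1 + |b|) * M - a := by
    have hM0 : 0 ≤ M := (abs_nonneg _).trans (hle 0)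
    refine (Real.le_sqrt hM0 ((sq_nonneg _).trans (hsq 0))).1 ?_
    exact ciSup_le fun n => Real.abs_le_sqrt (hsq n)
  nlinarith [sq_nonneg (2 * M - (1 + |b|))]

theorem bddAbove_abs_re_fst_of_isBounded {ι : Type*} {u : ι → ℂ × ℂ}
    (hu : Bornology.IsBounded (range u)) : BddAbove (range fun i => |(u i).1.re|) := by
  obtain ⟨C, hC⟩ := hu.exists_norm_le
  exact ⟨C, forall_mem_range.2 fun i =>
    (Complex.abs_re_le_norm _).trans <| (norm_fst_le _).trans <| hC _ (mem_range_self i)⟩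

section Henon

variable {a b : ℂ} (hb : b ≠ 0)

theorem henon_zpow_add_one_apply (n : ℤ) (p : ℂ × ℂ) :
    (henon a b hb ^ (n + 1)) p = henonMap a b ((henon a b hb ^ n) p) := by
  rw [add_comm, zpow_one_add, Equiv.Perm.mul_apply]
  rfl

theorem henon_zpow_add_one_apply_fst (n : ℤ) (p : ℂ × ℂ) :
    ((henon a b hb ^ (n + 1)) p).1 =
      ((henon a b hb ^ n) p).1 ^ 2 + a - b * ((henon a b hb ^ (n - 1)) p).1 := by
  rw [henon_zpow_add_one_apply, ← sub_add_cancel n 1, henon_zpow_add_one_apply (n := n - 1)]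
  simp only [henonMap, sub_add_cancel]

end Henon

def realPoints : Set (ℂ × ℂ) := range fun q : ℝ × ℝ => ((q.1 : ℂ), (q.2 : ℂ))

theorem bijOn_henon_realPoints (a b : ℝ) (hb : (b : ℂ) ≠ 0) :
    BijOn (henon a b hb) realPoints realPoints := by
  refine Equiv.bijOn' _ ?_ ?_ <;> rintro _ ⟨⟨u, v⟩, rfl⟩
  · exact ⟨(u ^ 2 + a - b * v, u), by simp [henon, henonMap]⟩
  · exact ⟨(v, (v ^ 2 + a - u) / b), by simp [henon]⟩

/-- For real parameters with `b ≠ 0` and `a > 2(|b|+1)²`, no real point has bounded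
full orbit under the Hénon map: `K_{a,b} ∩ ℝ² = ∅`. -/
theorem henonK_no_real_points (a b : ℝ) (hb : b ≠ 0)
    (ha : 2 * (|b| + 1) ^ 2 < a) :
    ∀ x y : ℝ, ((x : ℂ), (y : ℂ)) ∉
      henonK (a : ℂ) (b : ℂ) (Complex.ofReal_ne_zero.mpr hb) := by
  intro x y hK
  have hb' : (b : ℂ) ≠ 0 := Complex.ofReal_ne_zero.mpr hb
  set z : ℤ → ℂ := fun n => ((henon a b hb' ^ n) ((x : ℂ), (y : ℂ))).1
  have hreal : ∀ n, ((z n).re : ℂ) = z n := fun n => by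
    obtain ⟨q, hq⟩ := ((bijOn_henon_realPoints a b hb').perm_zpow n).mapsTo ⟨(x, y), rfl⟩
    simp only [z, ← hq, Complex.ofReal_re]
  have hrec : ∀ n, (z (n + 1)).re = (z n).re ^ 2 + a - b * (z (n - 1)).re := fun n => by
    apply Complex.ofReal_injective
    push_cast
    simp only [hreal]
    exact henon_zpow_add_one_apply_fst _ n _
  have h4a := four_mul_le_sq_of_bddAbove_of_recurrence (bddAbove_abs_re_fst_of_isBounded hK) hrec
  nlinarith [abs_nonneg b]
end

section
/- Let a ∈ ℝ with a < −2. Then every z ∈ ℂ whose forward orbit {g_a^n(z) : n ≥ 0} under g_a(z) = z² + a is bounded is a real number; that is, the filled Julia set of g_a is contained in ℝ. -/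
/-!
Write `a = β - β ^ 2` with `β > 2` the repelling fixed point of `g_a`. Since `‖g_a w‖ ≥ ‖w‖ ^ 2 - (β ^ 2 - β)`,
the distance of the orbit beyond `β` at least doubles each step, so a bounded orbit stays in the closed disc
of radius `β`. On that disc, `φ(x + iy) = y ^ 2 / (β ^ 2 - x ^ 2)` is at most `1` and at least doubles
under `g_a` whenever the image stays in the disc, so `φ` vanishes along a bounded orbit, i.e. `Im z = 0`.
-/

open Set Bornology

theorem exists_two_lt_and_eq_sub_sq {a : ℝ} (ha : a < -2) : ∃ β : ℝ, 2 < β ∧ a = β - β ^ 2 := by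
  have hsq : √(1 - 4 * a) ^ 2 = 1 - 4 * a := Real.sq_sqrt (by linarith)
  have h3 : 3 < √(1 - 4 * a) := by nlinarith [Real.sqrt_nonneg (1 - 4 * a)]
  exact ⟨(1 + √(1 - 4 * a)) / 2, by linarith, by linear_combination hsq / 4⟩

theorem norm_sq_sub_norm_le_norm_sq_add {𝕜 : Type*} [NormedDivisionRing 𝕜] (w c : 𝕜) :
    ‖w‖ ^ 2 - ‖c‖ ≤ ‖w ^ 2 + c‖ := by
  have := norm_sub_le (w ^ 2 + c) c
  rw [add_sub_cancel_right, norm_pow] at this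
  linarith

theorem not_bddAbove_range_of_mul_le {u : ℕ → ℝ} {r : ℝ} (hr : 1 < r) (h0 : 0 < u 0)
    (hu : ∀ n, 0 < u n → r * u n ≤ u (n + 1)) : ¬ BddAbove (range u) := by
  have hgrow : ∀ n, r ^ n * u 0 ≤ u n := by
    intro n
    induction n with
    | zero => simp
    | succ n ih =>
      calc r ^ (n + 1) * u 0 = r * (r ^ n * u 0) := by ring
        _ ≤ r * u n := by gcongr
        _ ≤ u (n + 1) := hu n (lt_of_lt_of_le (by positivity) ih)
  rintro ⟨C, hC⟩
  obtain ⟨n, hn⟩ := pow_unbounded_of_one_lt (C / u 0) hr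
  rw [div_lt_iff₀ h0] at hn
  linarith [hgrow n, hC (mem_range_self n)]

theorem norm_iterate_le_of_isBounded {𝕜 : Type*} [NormedDivisionRing 𝕜] {c : 𝕜} {β : ℝ}
    (hβ : 1 ≤ β) (hc : ‖c‖ ≤ β ^ 2 - β) {z : 𝕜}
    (hz : IsBounded (range fun n : ℕ => (fun w => w ^ 2 + c)^[n] z)) (n : ℕ) :
    ‖(fun w => w ^ 2 + c)^[n] z‖ ≤ β := by
  set Z : ℕ → 𝕜 := fun n => (fun w => w ^ 2 + c)^[n] z
  by_contra! hn
  apply not_bddAbove_range_of_mul_le (u := fun k => ‖Z (n + k)‖ - β) (r := 2) one_lt_two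
    (by simpa using hn)
  · intro k hk
    have hstep : ‖Z (n + k)‖ ^ 2 - ‖c‖ ≤ ‖Z (n + k + 1)‖ := by
      simpa only [Z, Function.iterate_succ_apply'] using
        norm_sq_sub_norm_le_norm_sq_add (Z (n + k)) c
    rw [← add_assoc]
    nlinarith
  · obtain ⟨C, hC⟩ := isBounded_iff_forall_norm_le.1 hz
    exact ⟨C - β, by rintro _ ⟨k, rfl⟩; linarith [hC _ (mem_range_self (n + k))]⟩

theorem Complex.re_sq_add_im_sq_le_sq {z : ℂ} {β : ℝ} (hz : ‖z‖ ≤ β) :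
    z.re ^ 2 + z.im ^ 2 ≤ β ^ 2 := by
  rw [← Complex.sq_norm_sub_sq_re z, add_sub_cancel]
  exact pow_le_pow_left₀ (norm_nonneg z) hz 2

/-- `(Im z / h) ^ 2`, where `h = √(β ^ 2 - (Re z) ^ 2)` is the half-length of the vertical chord
of the disc of radius `β` through `z`. -/
noncomputable def chordRatio (β : ℝ) (z : ℂ) : ℝ := z.im ^ 2 / (β ^ 2 - z.re ^ 2)

theorem chordRatio_le_one {β : ℝ} {z : ℂ} (hz : ‖z‖ ≤ β) : chordRatio β z ≤ 1 := by
  have := Complex.re_sq_add_im_sq_le_sq hz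
  exact div_le_one_of_le₀ (by linarith) (by nlinarith)

theorem chordRatio_pos {β : ℝ} {z : ℂ} (hz : ‖z‖ ≤ β) (him : z.im ≠ 0) : 0 < chordRatio β z := by
  have := Complex.re_sq_add_im_sq_le_sq hz
  have : 0 < z.im ^ 2 := by positivity
  exact div_pos this (by linarith)

theorem two_mul_chordRatio_le {β : ℝ} (hβ : 2 ≤ β) {z : ℂ} (hz : ‖z‖ ≤ β)
    (hgz : ‖z ^ 2 + ((β - β ^ 2 : ℝ) : ℂ)‖ ≤ β) :
    2 * chordRatio β z ≤ chordRatio β (z ^ 2 + ((β - β ^ 2 : ℝ) : ℂ)) := by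
  set w := z ^ 2 + ((β - β ^ 2 : ℝ) : ℂ)
  have hre : w.re = z.re ^ 2 - z.im ^ 2 + (β - β ^ 2) := by simp [w, sq]
  have him : w.im = 2 * z.re * z.im := by simp [w, sq]; ring
  have hzβ := Complex.re_sq_add_im_sq_le_sq hz
  have hwβ := Complex.re_sq_add_im_sq_le_sq hgz
  rcases eq_or_ne z.im 0 with hy | hy
  · rw [chordRatio, hy, zero_pow two_ne_zero, zero_div, mul_zero]
    exact div_nonneg (sq_nonneg _) (by nlinarith)
  have hy2 : 0 < z.im ^ 2 := by positivity
  have hm : 0 ≤ β ^ 2 - 2 * β := by nlinarith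
  -- on the imaginary axis `w` would leave the disc, since `β ^ 2 - 2 * β ≥ 0`
  have hx : z.re ≠ 0 := by
    intro hx
    rw [hre, hx] at hwβ
    have : β < z.im ^ 2 + (β ^ 2 - β) := by nlinarith
    nlinarith [sq_nonneg w.im]
  have hD : 0 < β ^ 2 - z.re ^ 2 := by linarith
  have hD' : 0 < β ^ 2 - w.re ^ 2 := by
    have : 0 < w.im ^ 2 := by rw [him]; positivity
    linarith
  rw [chordRatio, chordRatio, ← mul_div_assoc, div_le_div_iff₀ hD hD', hre, him]
  -- after cancelling `2 * (Im z) ^ 2`: `β ^ 2 - (Re w) ^ 2 ≤ 2 * (Re z) ^ 2 * (β ^ 2 - (Re z) ^ 2)`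
  nlinarith [mul_nonneg (mul_nonneg hy2.le (sq_nonneg z.re))
      (by linarith : 0 ≤ β ^ 2 - z.re ^ 2 - z.im ^ 2),
    mul_nonneg (mul_nonneg hy2.le (sq_nonneg z.im)) (by linarith : 0 ≤ z.im ^ 2 + (β ^ 2 - 2 * β)),
    mul_nonneg (mul_nonneg hy2.le hD.le) (by linarith : 0 ≤ z.im ^ 2 + (β ^ 2 - 2 * β))]

/-- For real `a < −2`, every complex point with bounded forward orbit under
`g_a(z) = z² + a` is real: the filled Julia set of `g_a` is contained in `ℝ`. -/
theorem filledJulia_real (a : ℝ) (ha : a < -2) :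
    ∀ z : ℂ, Bornology.IsBounded
        (Set.range fun n : ℕ => (fun w : ℂ => w ^ 2 + (a : ℂ))^[n] z) →
      z.im = 0 := by
  intro z hz
  obtain ⟨β, hβ, rfl⟩ := exists_two_lt_and_eq_sub_sq ha
  set Z : ℕ → ℂ := fun n => (fun w : ℂ => w ^ 2 + ((β - β ^ 2 : ℝ) : ℂ))^[n] z
  have hc : ‖((β - β ^ 2 : ℝ) : ℂ)‖ ≤ β ^ 2 - β := by
    rw [Complex.norm_real, Real.norm_of_nonpos (by nlinarith), neg_sub]
  have hdisc : ∀ n, ‖Z n‖ ≤ β := norm_iterate_le_of_isBounded (by linarith) hc hz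
  have hstep : ∀ n, Z (n + 1) = Z n ^ 2 + ((β - β ^ 2 : ℝ) : ℂ) := fun n =>
    Function.iterate_succ_apply' _ n z
  by_contra him
  refine not_bddAbove_range_of_mul_le one_lt_two (u := fun n => chordRatio β (Z n))
    (chordRatio_pos (hdisc 0) him) (fun n _ => ?_) ⟨1, ?_⟩
  · simpa only [hstep] using two_mul_chordRatio_le hβ.le (hdisc n) (hstep n ▸ hdisc (n + 1))
  · rintro _ ⟨n, rfl⟩
    exact chordRatio_le_one (hdisc n)
end

section
/- Let a ∈ ℝ. The forward orbit {g_a^n(0) : n ≥ 0} of the critical point 0 under g_a(x) = x² + a is bounded if and only if −2 ≤ a ≤ 1/4. (Equivalently, the intersection of the Mandelbrot set with the real axis is the interval [−2, 1/4].) -/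
/-- Linear growth lemma: if `f` moves every point `≥ c` up by at least `ε`,
then iterates starting at `x0 ≥ c` grow linearly. -/
lemma mandel_grow (f : ℝ → ℝ) (c ε x0 : ℝ) (hε : 0 ≤ ε)
    (hstep : ∀ x, c ≤ x → x + ε ≤ f x) (hc : c ≤ x0) :
    ∀ n : ℕ, c + n * ε ≤ f^[n] x0 := by
  intro n
  induction n with
  | zero => simpa using hc
  | succ n ih =>
    have hcn : c ≤ f^[n] x0 := le_trans (by nlinarith [Nat.cast_nonneg (α := ℝ) n]) ih
    have := hstep _ hcn
    rw [Function.iterate_succ_apply']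
    push_cast
    nlinarith

theorem mandel_unbounded (f : ℝ → ℝ) (c ε x0 : ℝ) (hε : 0 < ε)
    (hstep : ∀ x, c ≤ x → x + ε ≤ f x) (hc : c ≤ x0)
    (hmem : ∀ n : ℕ, f^[n] x0 ∈ Set.range fun n : ℕ => f^[n] (0 : ℝ)) :
    ¬ Bornology.IsBounded (Set.range fun n : ℕ => f^[n] (0 : ℝ)) := by
  intro hb
  obtain ⟨C, hC⟩ := isBounded_iff_forall_norm_le.mp hb
  obtain ⟨n, hn⟩ := exists_nat_gt ((C - c) / ε)
  have h1 : c + n * ε ≤ f^[n] x0 := mandel_grow f c ε x0 hε.le hstep hc n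
  have h2 : ‖f^[n] x0‖ ≤ C := hC _ (hmem n)
  rw [Real.norm_eq_abs] at h2
  have h3 : C - c < n * ε := by
    rw [div_lt_iff₀ hε] at hn; linarith
  have := abs_le.mp h2
  linarith

/-- For real `a`, the forward orbit of the critical point `0` under `g_a(x) = x² + a`
is bounded if and only if `−2 ≤ a ≤ 1/4`: the real slice of the Mandelbrot set is
the interval `[−2, 1/4]`. -/
theorem mandelbrot_real_slice (a : ℝ) :
    Bornology.IsBounded (Set.range fun n : ℕ => (fun x : ℝ => x ^ 2 + a)^[n] 0) ↔
      -2 ≤ a ∧ a ≤ 1 / 4 := by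
  set f : ℝ → ℝ := fun x => x ^ 2 + a with hf
  constructor
  · intro hb
    by_contra h
    push_neg at h
    rcases lt_or_ge a (-2) with ha | ha
    · -- a < -2 : orbit escapes
      set c : ℝ := a ^ 2 + a with hcdef
      have hc2 : (2 : ℝ) < c := by nlinarith
      have hx0 : f^[2] 0 = c := by
        simp [hf, Function.iterate_succ_apply', hcdef]
      refine mandel_unbounded f c ((a ^ 2 + a) ^ 2 - a ^ 2) (f^[2] 0) (by nlinarith)
        ?_ (by rw [hx0]) (fun n => ⟨n + 2, (Function.iterate_add_apply f n 2 0).symm⟩) hb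
      intro x hx
      have hx2 : (2 : ℝ) < x := lt_of_lt_of_le hc2 hx
      have key : 0 ≤ (x - c) * (x + c - 1) := by nlinarith
      simp only [hf]
      nlinarith
    · -- a > 1/4 : orbit escapes
      have ha4 : 1 / 4 < a := by
        rcases lt_or_ge (1 / 4 : ℝ) a with h1 | h1
        · exact h1
        · exact absurd h1 (not_le.mpr (lt_of_lt_of_le (by linarith [h ha]) le_rfl)).elim
      refine mandel_unbounded f 0 (a - 1 / 4) 0 (by linarith)
        ?_ le_rfl (fun n => ⟨n, rfl⟩) hb
      intro x _
      simp only [hf]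
      nlinarith [sq_nonneg (x - 1 / 2)]
  · rintro ⟨ha1, ha2⟩
    set s : ℝ := Real.sqrt (1 - 4 * a) with hsdef
    have hs0 : 0 ≤ s := Real.sqrt_nonneg _
    have hs2 : s ^ 2 = 1 - 4 * a := Real.sq_sqrt (by linarith)
    have hs3 : s ≤ 3 := by nlinarith
    set β : ℝ := (1 + s) / 2 with hβdef
    have hβ0 : 0 < β := by positivity
    have hfix : β ^ 2 + a = β := by
      rw [hβdef]; nlinarith
    have haβ : -β ≤ a := by nlinarith
    have hinv : ∀ x : ℝ, |x| ≤ β → |f x| ≤ β := by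
      intro x hx
      have h1 : x ^ 2 ≤ β ^ 2 := by
        rw [← sq_abs]; exact pow_le_pow_left₀ (abs_nonneg x) hx 2
      rw [abs_le]
      constructor
      · simp only [hf]; nlinarith [sq_nonneg x]
      · simp only [hf]; nlinarith
    have hbound : ∀ n : ℕ, |f^[n] 0| ≤ β := by
      intro n
      induction n with
      | zero => simpa using hβ0.le
      | succ n ih =>
        rw [Function.iterate_succ_apply']
        exact hinv _ ih
    refine isBounded_iff_forall_norm_le.mpr ⟨β, ?_⟩
    rintro x ⟨n, rfl⟩
    rw [Real.norm_eq_abs]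
    exact hbound n
end

section
/- Let a ∈ ℂ with |a| > 2, and let K_a = {z ∈ ℂ : the forward orbit {g_a^n(z) : n ≥ 0} is bounded}. Then there exists a homeomorphism h : K_a → Σ₂⁺ (K_a carrying the subspace topology from ℂ) such that h ∘ g_a = σ ∘ h on K_a; that is, g_a restricted to K_a is topologically conjugate to the one-sided full 2-shift. -/
/-!
Fix `c` with `c² = a` and put `r = |a| > 2`. An escape estimate gives `|z|² ≤ 2r < r²` on `K_a`,
so `K_a` is compact and lies in the disc `|w| < r`; moreover `|z² + a| < r` forces `(z / c)² + 1`
into the unit disc, so `z / c` is never real. The side of the line `cℝ` on which `g_aⁿ z` lies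
is therefore a continuous coding of the orbit.

On `|w| < r` the two inverse branches `±i c √(1 - w / c²)` of `g_a` are holomorphic, have values
on a fixed side of `cℝ`, and map into the smaller disc `|w| < √(2r)`. By the Schwarz lemma,
conjugated by Möbius automorphisms, they contract the pseudo-hyperbolic distance of the disc
`|w| < r` by a uniform factor `κ < 1`. Two points of `K_a` with the same itinerary are images of
their successors under the same branch, so their distance is `O(κⁿ)`: the itinerary map is
injective. Pulling a fixed point of `g_a` back along the branches realises every finite itinerary;
the image of the compact set `K_a` is closed, so every itinerary is realised. A continuous
bijection from a compact space onto a Hausdorff space is a homeomorphism.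
-/

/-- The one-sided full 2-shift space: one-sided sequences on two symbols, with the
product topology (each factor discrete). -/
abbrev Sigma2Plus : Type := ℕ → Bool

open Complex Metric Set Function Bornology Filter Topology ComplexConjugate

noncomputable section

section BoundedOrbits

variable {α : Type*} [Bornology α]

def boundedOrbits (f : α → α) : Set α := {x | IsBounded (range fun n => f^[n] x)}

variable {f : α → α} {x : α}

lemma apply_mem_boundedOrbits_iff : f x ∈ boundedOrbits f ↔ x ∈ boundedOrbits f := by
  simp only [boundedOrbits, mem_ofPred_eq, ← Nat.range_of_succ fun n => f^[n] x, isBounded_union,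
    isBounded_singleton, true_and]
  rfl

lemma iterate_mem_boundedOrbits (hx : x ∈ boundedOrbits f) (n : ℕ) : f^[n] x ∈ boundedOrbits f := by
  induction n with
  | zero => exact hx
  | succ n ih => rw [iterate_succ_apply']; exact apply_mem_boundedOrbits_iff.2 ih

lemma boundedOrbits_eq_iInter_preimage {B : Set α} (hB : IsBounded B)
    (hsub : boundedOrbits f ⊆ B) : boundedOrbits f = ⋂ n, f^[n] ⁻¹' B := by
  refine Subset.antisymm (fun x hx => mem_iInter.2 fun n => hsub (iterate_mem_boundedOrbits hx n))
    fun x hx => hB.subset ?_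
  rintro _ ⟨n, rfl⟩
  exact mem_iInter.1 hx n

lemma isCompact_boundedOrbits {α : Type*} [PseudoMetricSpace α] [ProperSpace α] {f : α → α}
    (hf : Continuous f) {B : Set α} (hB : IsBounded B) (hBc : IsClosed B)
    (hsub : boundedOrbits f ⊆ B) : IsCompact (boundedOrbits f) :=
  (boundedOrbits_eq_iInter_preimage hB hsub).symm ▸ isCompact_of_isClosed_isBounded
    (isClosed_iInter fun n => hBc.preimage (hf.iterate n))
    (hB.subset (iInter_subset _ 0))

end BoundedOrbits

lemma mem_of_isClosed_of_forall_exists_eq_of_lt {β : Type*} [TopologicalSpace β]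
    [DiscreteTopology β] {F : Set (ℕ → β)} (hF : IsClosed F) {x : ℕ → β}
    (h : ∀ n, ∃ y ∈ F, ∀ k < n, y k = x k) : x ∈ F := by
  choose y hyF hyx using h
  refine hF.mem_of_tendsto (b := atTop) (tendsto_pi_nhds.2 fun k => tendsto_const_nhds.congr' ?_)
    (Eventually.of_forall hyF)
  filter_upwards [eventually_gt_atTop k] with n hn using (hyx n k hn).symm

section Moebius

/-- `‖moebius p q‖` is the pseudo-hyperbolic distance of `p` and `q` in the unit disc. -/
def moebius (p w : ℂ) : ℂ := (w - p) / (1 - conj p * w)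

variable {p q : ℂ} {t : ℝ}

lemma sq_norm_one_sub_conj_mul_sub (p q : ℂ) :
    ‖1 - conj p * q‖ ^ 2 - ‖q - p‖ ^ 2 = (1 - ‖p‖ ^ 2) * (1 - ‖q‖ ^ 2) := by
  simp only [Complex.sq_norm, normSq_apply, sub_re, sub_im, mul_re, mul_im, conj_re, conj_im,
    one_re, one_im]
  ring

lemma norm_one_sub_conj_mul_le (p q : ℂ) : ‖1 - conj p * q‖ ≤ 1 + ‖p‖ * ‖q‖ :=
  (norm_sub_le _ _).trans_eq (by rw [norm_one, norm_mul, norm_conj])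

lemma one_sub_conj_mul_ne_zero (hp : ‖p‖ < 1) (hq : ‖q‖ ≤ 1) : 1 - conj p * q ≠ 0 := by
  refine sub_ne_zero.2 fun h => ?_
  have : ‖conj p * q‖ < 1 := by
    rw [norm_mul, norm_conj]
    nlinarith [norm_nonneg p, norm_nonneg q]
  rw [← h, norm_one] at this
  exact this.false

lemma norm_moebius (p q : ℂ) : ‖moebius p q‖ = ‖q - p‖ / ‖1 - conj p * q‖ := norm_div _ _

lemma norm_moebius_lt (ht : t ≤ 1) (hp : ‖p‖ < t) (hq : ‖q‖ < t) :
    ‖moebius p q‖ < 2 * t / (1 + t ^ 2) := by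
  have hp0 := norm_nonneg p
  have hq0 := norm_nonneg q
  have ht0 : 0 < t := hp0.trans_lt hp
  set D := ‖1 - conj p * q‖
  have hD : 0 < D := norm_pos_iff.2 (one_sub_conj_mul_ne_zero (hp.trans_le ht) (hq.le.trans ht))
  have hDle : D ≤ 1 + t ^ 2 := by
    calc D ≤ 1 + ‖p‖ * ‖q‖ := norm_one_sub_conj_mul_le p q
      _ ≤ 1 + t ^ 2 := by nlinarith
  have hX : (1 - t ^ 2) ^ 2 < (1 - ‖p‖ ^ 2) * (1 - ‖q‖ ^ 2) := by
    have h1 : 1 - t ^ 2 < 1 - ‖p‖ ^ 2 := by nlinarith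
    have h2 : 1 - t ^ 2 < 1 - ‖q‖ ^ 2 := by nlinarith
    have h3 : 0 ≤ 1 - t ^ 2 := by nlinarith
    nlinarith
  have hid := sq_norm_one_sub_conj_mul_sub p q
  rw [norm_moebius, div_lt_div_iff₀ hD (by positivity)]
  refine lt_of_pow_lt_pow_left₀ 2 (by positivity) ?_
  have hD2 : D ^ 2 ≤ (1 + t ^ 2) ^ 2 := pow_le_pow_left₀ hD.le hDle 2
  nlinarith [sq_nonneg (1 - t ^ 2)]

lemma norm_moebius_lt_one (hp : ‖p‖ < 1) (hq : ‖q‖ < 1) : ‖moebius p q‖ < 1 :=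
  (norm_moebius_lt le_rfl hp hq).trans_eq (by norm_num)

lemma norm_sub_le_two_mul_norm_moebius (hp : ‖p‖ < 1) (hq : ‖q‖ < 1) :
    ‖q - p‖ ≤ 2 * ‖moebius p q‖ := by
  have hD : 0 < ‖1 - conj p * q‖ := norm_pos_iff.2 (one_sub_conj_mul_ne_zero hp hq.le)
  have hD2 : ‖1 - conj p * q‖ ≤ 2 := by
    calc ‖1 - conj p * q‖ ≤ 1 + ‖p‖ * ‖q‖ := norm_one_sub_conj_mul_le p q
      _ ≤ 2 := by nlinarith [norm_nonneg p, norm_nonneg q]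
  rw [norm_moebius, mul_div_assoc', le_div_iff₀ hD]
  nlinarith [norm_nonneg (q - p)]

@[simp]
lemma moebius_self (p : ℂ) : moebius p p = 0 := by simp [moebius]

@[simp]
lemma moebius_neg_zero (p : ℂ) : moebius (-p) 0 = p := by simp [moebius]

lemma moebius_neg_moebius (hp : ‖p‖ < 1) (hq : ‖q‖ < 1) : moebius (-p) (moebius p q) = q := by
  have hD := one_sub_conj_mul_ne_zero hp hq.le
  have hnum : (q - p) / (1 - conj p * q) + p = q * (1 - conj p * p) / (1 - conj p * q) := by
    rw [eq_div_iff hD, add_mul, div_mul_cancel₀ _ hD]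
    ring
  have hden : 1 + conj p * ((q - p) / (1 - conj p * q)) = (1 - conj p * p) / (1 - conj p * q) := by
    rw [eq_div_iff hD, add_mul, mul_assoc, div_mul_cancel₀ _ hD]
    ring
  simp only [moebius, map_neg, sub_neg_eq_add, neg_mul, hnum, hden]
  rw [div_div_div_cancel_right₀ hD, mul_div_cancel_right₀ _ (one_sub_conj_mul_ne_zero hp hp.le)]

lemma differentiableOn_moebius (hp : ‖p‖ < 1) : DifferentiableOn ℂ (moebius p) (ball 0 1) :=
  fun w hw => DifferentiableAt.differentiableWithinAt <|
    show DifferentiableAt ℂ (fun w => (w - p) / (1 - conj p * w)) w from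
      .div (by fun_prop) (by fun_prop) (one_sub_conj_mul_ne_zero hp (mem_ball_zero_iff.1 hw).le)

lemma mapsTo_moebius (hp : ‖p‖ < 1) : MapsTo (moebius p) (ball 0 1) (ball 0 1) :=
  fun _ hw => mem_ball_zero_iff.2 (norm_moebius_lt_one hp (mem_ball_zero_iff.1 hw))

/-- Schwarz–Pick lemma with a gain: `moebius (f p) ∘ f ∘ moebius (-p)` fixes `0` and maps the
disc into the disc of radius `2t / (1 + t²)`, so the Schwarz lemma applies to it. -/
theorem norm_moebius_apply_le {f : ℂ → ℂ} (hf : DifferentiableOn ℂ f (ball 0 1)) (ht : t ≤ 1)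
    (hft : MapsTo f (ball 0 1) (ball 0 t)) (hp : ‖p‖ < 1) (hq : ‖q‖ < 1) :
    ‖moebius (f p) (f q)‖ ≤ 2 * t / (1 + t ^ 2) * ‖moebius p q‖ := by
  have hfp : ‖f p‖ < t := mem_ball_zero_iff.1 (hft (mem_ball_zero_iff.2 hp))
  have hnp : ‖-p‖ < 1 := by rwa [norm_neg]
  set G := moebius (f p) ∘ f ∘ moebius (-p)
  have hG0 : G 0 = 0 := by simp only [G, comp_apply, moebius_neg_zero, moebius_self]
  have hGd : DifferentiableOn ℂ G (ball 0 1) :=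
    (differentiableOn_moebius (hfp.trans_le ht)).comp (hf.comp (differentiableOn_moebius hnp)
      (mapsTo_moebius hnp)) ((hft.comp (mapsTo_moebius hnp)).mono_right (ball_subset_ball ht))
  have hGmaps : MapsTo G (ball 0 1) (closedBall (G 0) (2 * t / (1 + t ^ 2))) := fun w hw => by
    rw [hG0, mem_closedBall_zero_iff]
    exact (norm_moebius_lt ht hfp (mem_ball_zero_iff.1 (hft (mapsTo_moebius hnp hw)))).le
  have hpq := mem_ball_zero_iff.2 (norm_moebius_lt_one hp hq)
  simpa [G, hG0, moebius_neg_moebius hp hq] using dist_le_div_mul_dist_of_mapsTo_ball hGd hGmaps hpq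

end Moebius

def filledJulia (a : ℂ) : Set ℂ := boundedOrbits fun z => z ^ 2 + a

section Escape

variable {a z : ℂ}

lemma sq_add_mem_filledJulia_iff : z ^ 2 + a ∈ filledJulia a ↔ z ∈ filledJulia a :=
  apply_mem_boundedOrbits_iff

lemma sq_norm_sub_le_norm_sq_add (a z : ℂ) : ‖z‖ ^ 2 - ‖a‖ ≤ ‖z ^ 2 + a‖ := by
  have h := norm_sub_norm_le (z ^ 2) (-a)
  rwa [norm_neg, sub_neg_eq_add, norm_pow] at h

lemma mul_pow_le_norm_iterate (hz : 2 < ‖z‖) (ha : ‖a‖ ≤ ‖z‖) (n : ℕ) :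
    ‖z‖ * (‖z‖ - 1) ^ n ≤ ‖(fun w => w ^ 2 + a)^[n] z‖ := by
  induction n with
  | zero => simp
  | succ n ih =>
    rw [iterate_succ_apply']
    set w := (fun w => w ^ 2 + a)^[n] z
    have hzw : ‖z‖ ≤ ‖w‖ :=
      le_mul_of_one_le_right (norm_nonneg z) (one_le_pow₀ (by linarith)) |>.trans ih
    calc ‖z‖ * (‖z‖ - 1) ^ (n + 1) = ‖z‖ * (‖z‖ - 1) ^ n * (‖z‖ - 1) := by ring
      _ ≤ ‖w‖ * (‖w‖ - 1) := by gcongr; linarith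
      _ ≤ ‖w‖ ^ 2 - ‖a‖ := by nlinarith
      _ ≤ ‖w ^ 2 + a‖ := sq_norm_sub_le_norm_sq_add a w

lemma norm_le_of_mem_filledJulia (hz : z ∈ filledJulia a) : ‖z‖ ≤ max 2 ‖a‖ := by
  by_contra! h
  rw [max_lt_iff] at h
  obtain ⟨C, hC⟩ := isBounded_iff_forall_norm_le.1
    (show IsBounded (range fun n => (fun w => w ^ 2 + a)^[n] z) from hz)
  obtain ⟨n, hn⟩ := pow_unbounded_of_one_lt (C / ‖z‖) (by linarith : 1 < ‖z‖ - 1)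
  have := (mul_pow_le_norm_iterate h.1 h.2.le n).trans (hC _ ⟨n, rfl⟩)
  rw [div_lt_iff₀ (by linarith)] at hn
  linarith

lemma isCompact_filledJulia (a : ℂ) : IsCompact (filledJulia a) :=
  isCompact_boundedOrbits (by fun_prop) isBounded_closedBall isClosed_closedBall
    fun _ hz => mem_closedBall_zero_iff.2 (norm_le_of_mem_filledJulia hz)

lemma sq_norm_le_of_mem_filledJulia (ha : 2 < ‖a‖) (hz : z ∈ filledJulia a) :
    ‖z‖ ^ 2 ≤ 2 * ‖a‖ := by
  have := norm_le_of_mem_filledJulia (sq_add_mem_filledJulia_iff.2 hz)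
  rw [max_eq_right ha.le] at this
  linarith [sq_norm_sub_le_norm_sq_add a z]

lemma norm_lt_of_mem_filledJulia (ha : 2 < ‖a‖) (hz : z ∈ filledJulia a) : ‖z‖ < ‖a‖ := by
  have := sq_norm_le_of_mem_filledJulia ha hz
  nlinarith [norm_nonneg z]

end Escape

section Coding

variable {a c z w : ℂ}

lemma ne_zero_of_sq_eq (ha : 2 < ‖a‖) (hc : c ^ 2 = a) : c ≠ 0 := by
  rintro rfl
  norm_num [← hc] at ha

lemma norm_div_norm (w a : ℂ) : ‖w / ‖a‖‖ = ‖w‖ / ‖a‖ := by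
  rw [norm_div, norm_real, norm_norm]

lemma norm_eq_sq_norm_of_sq_eq (hc : c ^ 2 = a) : ‖a‖ = ‖c‖ ^ 2 := by rw [← hc, norm_pow]

def bit (c z : ℂ) : Bool := decide (0 < (z / c).im)

lemma im_div_ne_zero_of_mem_filledJulia (ha : 2 < ‖a‖) (hc : c ^ 2 = a)
    (hz : z ∈ filledJulia a) : (z / c).im ≠ 0 := by
  intro him
  have hc0 := ne_zero_of_sq_eq ha hc
  set x := (z / c).re
  have hx : z / c = x := Complex.ext (by simp [x]) (by simp [him])
  have hsq : z ^ 2 + a = a * ((x ^ 2 + 1 : ℝ) : ℂ) := by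
    rw [← hc]
    push_cast
    rw [← hx]
    field_simp
  have hlt := norm_lt_of_mem_filledJulia ha (sq_add_mem_filledJulia_iff.2 hz)
  rw [hsq, norm_mul, norm_real, Real.norm_of_nonneg (by positivity)] at hlt
  nlinarith [norm_nonneg a, sq_nonneg x]

lemma bit_neg (h : (z / c).im ≠ 0) : bit c (-z) = !bit c z := by
  rcases h.lt_or_gt with h | h <;> simp [bit, neg_div, h, h.not_gt]

lemma continuousAt_bit (h : (z / c).im ≠ 0) : ContinuousAt (bit c) z := by
  have hcont : Continuous fun y : ℂ => (y / c).im := by fun_prop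
  refine continuousAt_const.congr (f := fun _ => bit c z) ?_
  rcases h.lt_or_gt with h | h
  · filter_upwards [hcont.continuousAt.eventually_lt continuousAt_const h] with y hy
    simp [bit, h.not_gt, hy.not_gt]
  · filter_upwards [continuousAt_const.eventually_lt hcont.continuousAt h] with y hy
    simp [bit, h, hy]

def branch (c : ℂ) (ε : Bool) (w : ℂ) : ℂ :=
  (if ε then I else -I) * c * Complex.sqrt (1 - w / c ^ 2)

lemma re_one_sub_div_sq_pos (hw : ‖w‖ < ‖c‖ ^ 2) : 0 < (1 - w / c ^ 2).re := by
  have h : (w / c ^ 2).re < 1 := by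
    refine (re_le_norm _).trans_lt ?_
    rw [norm_div, norm_pow, div_lt_one (by nlinarith [norm_nonneg w])]
    exact hw
  simp only [sub_re, one_re]
  linarith

lemma branch_sq (hc : c ≠ 0) (ε : Bool) (w : ℂ) : branch c ε w ^ 2 = w - c ^ 2 := by
  have hs : Complex.sqrt (1 - w / c ^ 2) ^ 2 = 1 - w / c ^ 2 := cpow_ofNat_inv_pow _ 2
  have hI : (if ε then I else -I) ^ 2 = -1 := by cases ε <;> simp
  rw [branch, mul_pow, mul_pow, hs, hI]
  field_simp
  ring

lemma bit_branch (hw : ‖w‖ < ‖c‖ ^ 2) (ε : Bool) : bit c (branch c ε w) = ε := by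
  have hc : c ≠ 0 := by rintro rfl; simp at hw; linarith [norm_nonneg w]
  have hre : 0 < (Complex.sqrt (1 - w / c ^ 2)).re := by
    rw [Complex.sqrt, cpow_inv_two_re]
    have := re_one_sub_div_sq_pos hw
    have := re_le_norm (1 - w / c ^ 2)
    positivity
  have hdiv : branch c ε w / c = (if ε then I else -I) * Complex.sqrt (1 - w / c ^ 2) := by
    rw [branch]
    field_simp
  cases ε <;> simp [bit, hdiv, hre, hre.le]

lemma differentiableOn_branch (ε : Bool) : DifferentiableOn ℂ (branch c ε) (ball 0 (‖c‖ ^ 2)) :=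
  fun w hw => by
    have h := re_one_sub_div_sq_pos (mem_ball_zero_iff.1 hw)
    have : DifferentiableAt ℂ (fun w => (if ε then I else -I) * c * Complex.sqrt (1 - w / c ^ 2))
        w := by
      fun_prop (disch := exact Or.inl h)
    exact this.differentiableWithinAt

lemma sq_norm_branch_lt (hw : ‖w‖ < ‖c‖ ^ 2) (ε : Bool) : ‖branch c ε w‖ ^ 2 < 2 * ‖c‖ ^ 2 := by
  have hc : c ≠ 0 := by rintro rfl; simp at hw; linarith [norm_nonneg w]
  rw [← norm_pow, branch_sq hc]
  calc ‖w - c ^ 2‖ ≤ ‖w‖ + ‖c‖ ^ 2 := (norm_sub_le _ _).trans_eq (by rw [norm_pow])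
    _ < 2 * ‖c‖ ^ 2 := by linarith

end Coding

section Itinerary

variable {a c z : ℂ}

lemma branch_sq_add (ha : 2 < ‖a‖) (hc : c ^ 2 = a) (ε : Bool) (w : ℂ) :
    branch c ε w ^ 2 + a = w := by
  rw [branch_sq (ne_zero_of_sq_eq ha hc), hc, sub_add_cancel]

lemma branch_bit_sq_add (ha : 2 < ‖a‖) (hc : c ^ 2 = a) (hz : z ∈ filledJulia a) :
    branch c (bit c z) (z ^ 2 + a) = z := by
  have hgz : ‖z ^ 2 + a‖ < ‖c‖ ^ 2 := norm_eq_sq_norm_of_sq_eq hc ▸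
    norm_lt_of_mem_filledJulia ha (sq_add_mem_filledJulia_iff.2 hz)
  have hsq : (branch c (bit c z) (z ^ 2 + a) - z) * (branch c (bit c z) (z ^ 2 + a) + z) = 0 := by
    linear_combination branch_sq_add ha hc (bit c z) (z ^ 2 + a)
  refine sub_eq_zero.1 <| (mul_eq_zero.1 hsq).resolve_right fun h => ?_
  have hbit := bit_branch hgz (bit c z)
  rw [eq_neg_of_add_eq_zero_left h, bit_neg (im_div_ne_zero_of_mem_filledJulia ha hc hz)] at hbit
  simp at hbit

lemma branch_mem_filledJulia (ha : 2 < ‖a‖) (hc : c ^ 2 = a) (hz : z ∈ filledJulia a)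
    (ε : Bool) : branch c ε z ∈ filledJulia a := by
  rw [← sq_add_mem_filledJulia_iff, branch_sq_add ha hc]
  exact hz

def itinerary (a c z : ℂ) (n : ℕ) : Bool := bit c ((fun w => w ^ 2 + a)^[n] z)

lemma continuous_itinerary (ha : 2 < ‖a‖) (hc : c ^ 2 = a) :
    Continuous fun z : filledJulia a => itinerary a c z := by
  have hg : Continuous fun w : ℂ => w ^ 2 + a := by fun_prop
  exact continuous_pi fun n => continuous_iff_continuousAt.2 fun z =>
    ContinuousAt.comp (g := bit c) (continuousAt_bit (im_div_ne_zero_of_mem_filledJulia ha hc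
      (iterate_mem_boundedOrbits z.2 n))) ((hg.iterate n).comp continuous_subtype_val).continuousAt

lemma exists_contraction_branch (ha : 2 < ‖a‖) (hc : c ^ 2 = a) :
    ∃ κ ∈ Ico (0 : ℝ) 1, ∀ (ε : Bool) {w w' : ℂ}, ‖w‖ < ‖a‖ → ‖w'‖ < ‖a‖ →
      ‖moebius (branch c ε w / ‖a‖) (branch c ε w' / ‖a‖)‖ ≤
        κ * ‖moebius (w / ‖a‖) (w' / ‖a‖)‖ := by
  set r := ‖a‖
  have hr : 0 < r := by linarith
  have hcr : ‖c‖ ^ 2 = r := (norm_eq_sq_norm_of_sq_eq hc).symm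
  set t := √(2 / r)
  have ht1 : t < 1 := by
    rw [Real.sqrt_lt' one_pos, one_pow, div_lt_one hr]
    linarith
  have ht0 : 0 ≤ t := Real.sqrt_nonneg _
  refine ⟨2 * t / (1 + t ^ 2), ⟨by positivity, by rw [div_lt_one (by positivity)]; nlinarith⟩,
    fun ε w w' hw hw' => ?_⟩
  set f : ℂ → ℂ := fun ζ => branch c ε (r * ζ) / r
  have hscale : MapsTo (fun ζ : ℂ => (r : ℂ) * ζ) (ball 0 1) (ball 0 (‖c‖ ^ 2)) := fun ζ hζ => by
    rw [mem_ball_zero_iff, hcr, norm_mul, norm_real, Real.norm_of_nonneg hr.le]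
    exact mul_lt_of_lt_one_right hr (mem_ball_zero_iff.1 hζ)
  have hf : DifferentiableOn ℂ f (ball 0 1) :=
    ((differentiableOn_branch ε).comp (by fun_prop) hscale).div_const _
  have hft : MapsTo f (ball 0 1) (ball 0 t) := fun ζ hζ => by
    have h := sq_norm_branch_lt (mem_ball_zero_iff.1 (hscale hζ)) ε
    rw [mem_ball_zero_iff, norm_div_norm, Real.lt_sqrt (by positivity), div_pow, div_lt_div_iff₀
      (by positivity) hr]
    nlinarith
  have hfw : ∀ w : ℂ, f (w / r) = branch c ε w / r := fun w => by
    simp only [f, mul_div_cancel₀ _ (ofReal_ne_zero.2 hr.ne')]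
  have hlt : ∀ {w : ℂ}, ‖w‖ < r → ‖w / r‖ < 1 := fun hw => by rwa [norm_div_norm, div_lt_one hr]
  simpa only [hfw] using norm_moebius_apply_le hf ht1.le hft (hlt hw) (hlt hw')

lemma injective_itinerary (ha : 2 < ‖a‖) (hc : c ^ 2 = a) :
    Injective fun z : filledJulia a => itinerary a c z := by
  obtain ⟨κ, ⟨hκ0, hκ1⟩, hκ⟩ := exists_contraction_branch ha hc
  set r := ‖a‖
  have hr : 0 < r := by linarith
  have hball : ∀ z ∈ filledJulia a, ‖z / r‖ < 1 := fun z hz => by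
    rw [norm_div_norm, div_lt_one hr]
    exact norm_lt_of_mem_filledJulia ha hz
  have key : ∀ n, ∀ z ∈ filledJulia a, ∀ z' ∈ filledJulia a, itinerary a c z = itinerary a c z' →
      ‖moebius (z / r) (z' / r)‖ ≤ κ ^ n := by
    intro n
    induction n with
    | zero =>
      intro z hz z' hz' _
      simpa using (norm_moebius_lt_one (hball z hz) (hball z' hz')).le
    | succ n ih =>
      intro z hz z' hz' h
      have hgz := sq_add_mem_filledJulia_iff.2 hz
      have hgz' := sq_add_mem_filledJulia_iff.2 hz'
      have hstep := hκ (bit c z) (norm_lt_of_mem_filledJulia ha hgz)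
        (norm_lt_of_mem_filledJulia ha hgz')
      have hbit : bit c z = bit c z' := congrFun h 0
      rw [branch_bit_sq_add ha hc hz, hbit, branch_bit_sq_add ha hc hz'] at hstep
      calc ‖moebius (z / r) (z' / r)‖ ≤ κ * ‖moebius ((z ^ 2 + a) / r) ((z' ^ 2 + a) / r)‖ := hstep
        _ ≤ κ * κ ^ n :=
          mul_le_mul_of_nonneg_left (ih _ hgz _ hgz' (funext fun k => congrFun h (k + 1))) hκ0
        _ = κ ^ (n + 1) := by ring
  rintro ⟨z, hz⟩ ⟨z', hz'⟩ h
  have hle : ∀ n, ‖z' - z‖ ≤ 2 * r * κ ^ n := fun n => by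
    have := norm_sub_le_two_mul_norm_moebius (hball z hz) (hball z' hz')
    rw [← sub_div, norm_div_norm, div_le_iff₀ hr] at this
    nlinarith [key n z hz z' hz' h]
  have hlim : Tendsto (fun n => 2 * r * κ ^ n) atTop (𝓝 0) := by
    simpa using (tendsto_pow_atTop_nhds_zero_of_lt_one hκ0 hκ1).const_mul (2 * r)
  exact Subtype.ext (sub_eq_zero.1 (norm_le_zero_iff.1 (ge_of_tendsto' hlim hle))).symm

lemma exists_sq_add_eq_self (a : ℂ) : ∃ z : ℂ, z ^ 2 + a = z := by
  obtain ⟨s, hs⟩ := IsAlgClosed.exists_eq_mul_self (discrim 1 (-1) a)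
  obtain ⟨z, hz⟩ := exists_quadratic_eq_zero one_ne_zero ⟨s, hs⟩
  exact ⟨z, by linear_combination hz⟩

lemma filledJulia_nonempty (a : ℂ) : (filledJulia a).Nonempty := by
  obtain ⟨z, hz⟩ := exists_sq_add_eq_self a
  refine ⟨z, (isBounded_singleton (x := z)).subset ?_⟩
  rintro _ ⟨n, rfl⟩
  exact iterate_fixed hz n

lemma exists_mem_filledJulia_itinerary_eq (ha : 2 < ‖a‖) (hc : c ^ 2 = a) (x : ℕ → Bool)
    (n : ℕ) : ∃ z ∈ filledJulia a, ∀ k < n, itinerary a c z k = x k := by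
  induction n generalizing x with
  | zero =>
    obtain ⟨z, hz⟩ := filledJulia_nonempty a
    exact ⟨z, hz, by simp⟩
  | succ n ih =>
    obtain ⟨z, hz, hzx⟩ := ih fun k => x (k + 1)
    refine ⟨branch c (x 0) z, branch_mem_filledJulia ha hc hz _, fun k hk => ?_⟩
    cases k with
    | zero => exact bit_branch (norm_eq_sq_norm_of_sq_eq hc ▸ norm_lt_of_mem_filledJulia ha hz) _
    | succ k =>
      show itinerary a c (branch c (x 0) z ^ 2 + a) k = _
      rw [branch_sq_add ha hc]
      exact hzx k (by omega)

lemma surjective_itinerary (ha : 2 < ‖a‖) (hc : c ^ 2 = a) :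
    Surjective fun z : filledJulia a => itinerary a c z := by
  have : CompactSpace (filledJulia a) := isCompact_iff_compactSpace.1 (isCompact_filledJulia a)
  refine fun x => mem_of_isClosed_of_forall_exists_eq_of_lt
    (isCompact_range (continuous_itinerary ha hc)).isClosed fun n => ?_
  obtain ⟨z, hz, hzx⟩ := exists_mem_filledJulia_itinerary_eq ha hc x n
  exact ⟨_, ⟨⟨z, hz⟩, rfl⟩, hzx⟩

end Itinerary

end

/-- For `|a| > 2`, the restriction of `g_a(z) = z² + a` to its filled Julia set
`K_a = {z : forward orbit bounded}` is topologically conjugate to the one-sided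
full 2-shift: `K_a` is invariant, and there is a homeomorphism `h : K_a → Σ₂⁺` with
`h ∘ g_a = σ ∘ h`. -/
theorem quadratic_complex_horseshoe (a : ℂ) (ha : 2 < ‖a‖)
    (Ka : Set ℂ)
    (hKa : Ka = {z : ℂ | Bornology.IsBounded
      (Set.range fun n : ℕ => (fun w : ℂ => w ^ 2 + a)^[n] z)}) :
    (∀ z ∈ Ka, z ^ 2 + a ∈ Ka) ∧
    ∃ h : Ka ≃ₜ Sigma2Plus,
      ∀ (z : ℂ) (hz : z ∈ Ka) (hgz : z ^ 2 + a ∈ Ka),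
        h ⟨z ^ 2 + a, hgz⟩ = fun n => h ⟨z, hz⟩ (n + 1) := by
  obtain rfl : Ka = filledJulia a := hKa
  obtain ⟨c, hc⟩ := IsAlgClosed.exists_pow_nat_eq a two_pos
  have : CompactSpace (filledJulia a) := isCompact_iff_compactSpace.1 (isCompact_filledJulia a)
  exact ⟨fun z hz => sq_add_mem_filledJulia_iff.2 hz,
    (continuous_itinerary ha hc).homeoOfEquivCompactToT2
      (f := .ofBijective _ ⟨injective_itinerary ha hc, surjective_itinerary ha hc⟩),
    fun z hz hgz => rfl⟩
end

section
/- For all a, b ∈ ℂ with b ≠ 0 and every integer N ≥ 1, the set Per_N(a,b) = {p ∈ ℂ² : f_{a,b}^N(p) = p} of periodic points of the Hénon map whose period divides N is finite. -/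
/-!
The periodic points of period dividing `N` are the common zeros of two polynomials
`P, Q ∈ ℂ[x][y]`, and `Q(x, ·)` has degree `2 ^ (N - 1)` in `y` for every `x`, so each vertical
fibre is finite. If `P` and `Q` are coprime over `ℂ(x)`, clearing denominators in a Bézout
identity gives a nonzero polynomial in `x` vanishing at the `x`-coordinates of all periodic
points, so there are finitely many. Otherwise a common factor of positive degree in `y` has
zeros over all but finitely many `x`, producing periodic points with arbitrarily large `|x|`.
This is impossible: where `|xₙ|` is maximal along a periodic orbit, the recurrence
`xₙ₊₁ = xₙ² + a − b xₙ₋₁` forces `|xₙ| ≤ 1 + |a| + |b|`.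
-/

open Polynomial

namespace Polynomial

theorem natDegree_sq_add {R : Type*} [Semiring R] [NoZeroDivisors R] {u v : R[X]}
    (h : v.natDegree < 2 * u.natDegree) : (u ^ 2 + v).natDegree = 2 * u.natDegree := by
  rw [natDegree_add_eq_left_of_natDegree_lt (by rw [natDegree_pow]; omega), natDegree_pow,
    mul_comm]

section FractionRing

variable {A K : Type*} [CommRing A] [IsDomain A] [Field K] [Algebra A K] [IsFractionRing A K]

theorem exists_map_eq_C_mul (g : K[X]) :
    ∃ (G : A[X]) (c : A), c ≠ 0 ∧ G.map (algebraMap A K) = C (algebraMap A K c) * g := by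
  obtain ⟨c, hc, hG⟩ := IsLocalization.integerNormalization_spec (nonZeroDivisors A) g
  exact ⟨_, c, nonZeroDivisors.ne_zero hc, by rw [hG, ← smul_eq_C_mul, algebraMap_smul]⟩

theorem exists_mul_add_mul_eq_C_of_isCoprime_map {P Q : A[X]}
    (h : IsCoprime (P.map (algebraMap A K)) (Q.map (algebraMap A K))) :
    ∃ (U V : A[X]) (c : A), c ≠ 0 ∧ U * P + V * Q = C c := by
  obtain ⟨u, v, huv⟩ := h
  obtain ⟨U, cu, hcu, hU⟩ := exists_map_eq_C_mul (A := A) u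
  obtain ⟨V, cv, hcv, hV⟩ := exists_map_eq_C_mul (A := A) v
  refine ⟨C cv * U, C cu * V, cu * cv, mul_ne_zero hcu hcv,
    map_injective _ (IsFractionRing.injective A K) ?_⟩
  simp only [Polynomial.map_add, Polynomial.map_mul, Polynomial.map_C, hU, hV, map_mul]
  linear_combination (C (algebraMap A K cu) * C (algebraMap A K cv)) * huv

theorem exists_mul_eq_C_mul_of_map_dvd_map {G P : A[X]}
    (h : G.map (algebraMap A K) ∣ P.map (algebraMap A K)) :
    ∃ (H : A[X]) (c : A), c ≠ 0 ∧ G * H = C c * P := by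
  obtain ⟨g, hg⟩ := h
  obtain ⟨H, c, hc, hH⟩ := exists_map_eq_C_mul (A := A) g
  refine ⟨H, c, hc, map_injective _ (IsFractionRing.injective A K) ?_⟩
  simp only [Polynomial.map_mul, Polynomial.map_C, hH, hg]
  ring

theorem exists_common_factor_of_not_isCoprime_map {P Q : A[X]} (hQ : Q ≠ 0)
    (h : ¬IsCoprime (P.map (algebraMap A K)) (Q.map (algebraMap A K))) :
    ∃ G : A[X], 0 < G.natDegree ∧ (∃ (H : A[X]) (c : A), c ≠ 0 ∧ G * H = C c * P) ∧
      ∃ (H : A[X]) (c : A), c ≠ 0 ∧ G * H = C c * Q := by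
  have hinj := IsFractionRing.injective A K
  obtain ⟨g, hg, hgP, hgQ⟩ :
      ∃ g, Irreducible g ∧ g ∣ P.map (algebraMap A K) ∧ g ∣ Q.map (algebraMap A K) := by
    by_contra! H
    exact h <| isCoprime_of_irreducible_dvd
      (fun h0 => (Polynomial.map_ne_zero_iff hinj).2 hQ h0.2) H
  obtain ⟨G, c, hc, hG⟩ := exists_map_eq_C_mul (A := A) g
  have hc' : algebraMap A K c ≠ 0 := (_root_.map_ne_zero_iff _ hinj).2 hc
  have hunit : IsUnit (C (algebraMap A K c)) := isUnit_C.2 hc'.isUnit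
  refine ⟨G, ?_, exists_mul_eq_C_mul_of_map_dvd_map (K := K) ?_,
    exists_mul_eq_C_mul_of_map_dvd_map (K := K) ?_⟩
  · rw [← natDegree_map_eq_of_injective hinj, hG, natDegree_C_mul hc']
    exact hg.natDegree_pos
  · rwa [hG, hunit.mul_left_dvd]
  · rwa [hG, hunit.mul_left_dvd]

end FractionRing

section Bivariate

variable {k : Type*} [Field k]

def commonZeros (P Q : k[X][X]) : Set (k × k) :=
  {p | P.evalEval p.1 p.2 = 0 ∧ Q.evalEval p.1 p.2 = 0}

theorem finite_fst_commonZeros_of_isCoprime {P Q : k[X][X]}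
    (h : IsCoprime (P.map (algebraMap k[X] (FractionRing k[X])))
      (Q.map (algebraMap k[X] (FractionRing k[X])))) :
    (Prod.fst '' commonZeros P Q).Finite := by
  obtain ⟨U, V, d, hd, hUV⟩ := exists_mul_add_mul_eq_C_of_isCoprime_map h
  refine (finite_setOfPred_isRoot hd).subset ?_
  rintro _ ⟨⟨x, y⟩, ⟨hP, hQ⟩, rfl⟩
  have := congrArg (evalEval x y) hUV
  simp only [evalEval_add, evalEval_mul, hP, hQ, mul_zero, add_zero, evalEval_C] at this
  exact this.symm

theorem finite_compl_fst_commonZeros_of_not_isCoprime [IsAlgClosed k] {P Q : k[X][X]}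
    (hQ : Q ≠ 0)
    (h : ¬IsCoprime (P.map (algebraMap k[X] (FractionRing k[X])))
      (Q.map (algebraMap k[X] (FractionRing k[X])))) :
    (Prod.fst '' commonZeros P Q)ᶜ.Finite := by
  obtain ⟨G, hG, ⟨H₁, c₁, hc₁, hGP⟩, H₂, c₂, hc₂, hGQ⟩ :=
    exists_common_factor_of_not_isCoprime_map hQ h
  have hlc : G.leadingCoeff ≠ 0 := leadingCoeff_ne_zero.2 (ne_zero_of_natDegree_gt hG)
  refine (finite_setOfPred_isRoot (mul_ne_zero (mul_ne_zero hc₁ hc₂) hlc)).subset ?_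
  intro x hx
  by_contra hne
  simp only [Set.mem_ofPred_eq, IsRoot, eval_mul, mul_eq_zero, not_or] at hne
  obtain ⟨⟨hx₁, hx₂⟩, hxG⟩ := hne
  obtain ⟨y, hy⟩ := IsAlgClosed.exists_root (G.map (evalRingHom x)) <| by
    rw [degree_map_eq_of_leadingCoeff_ne_zero _ hxG]
    exact (natDegree_pos_iff_degree_pos.1 hG).ne'
  rw [IsRoot, map_evalRingHom_eval] at hy
  have vanish : ∀ {H R : k[X][X]} {c : k[X]}, c.eval x ≠ 0 → G * H = C c * R →
      R.evalEval x y = 0 := fun hc hGH => by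
    simpa [evalEval_mul, evalEval_C, hy, hc] using (congrArg (evalEval x y) hGH).symm
  exact hx ⟨(x, y), ⟨vanish hx₁ hGP, vanish hx₂ hGQ⟩, rfl⟩

theorem finite_or_finite_compl_fst_commonZeros [IsAlgClosed k] (P : k[X][X]) {Q : k[X][X]}
    (hQ : Q ≠ 0) :
    (Prod.fst '' commonZeros P Q).Finite ∨ (Prod.fst '' commonZeros P Q)ᶜ.Finite := by
  by_cases h : IsCoprime (P.map (algebraMap k[X] (FractionRing k[X])))
      (Q.map (algebraMap k[X] (FractionRing k[X])))
  · exact Or.inl (finite_fst_commonZeros_of_isCoprime h)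
  · exact Or.inr (finite_compl_fst_commonZeros_of_not_isCoprime hQ h)

theorem finite_commonZeros_of_finite_fst {P Q : k[X][X]}
    (hfst : (Prod.fst '' commonZeros P Q).Finite)
    (hQ : ∀ x, Q.map (evalRingHom x) ≠ 0) : (commonZeros P Q).Finite := by
  refine (hfst.biUnion fun x _ => (Set.finite_singleton x).prod
    (finite_setOfPred_isRoot (hQ x))).subset ?_
  rintro ⟨x, y⟩ hxy
  refine Set.mem_biUnion ⟨(x, y), hxy, rfl⟩ ⟨rfl, ?_⟩
  rw [Set.mem_ofPred_eq, IsRoot, map_evalRingHom_eval]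
  exact hxy.2

end Bivariate

end Polynomial

theorem Complex.finite_commonZeros_of_isBounded {P Q : ℂ[X][X]}
    (hQ : ∀ x, Q.map (evalRingHom x) ≠ 0)
    (hbdd : Bornology.IsBounded (Prod.fst '' commonZeros P Q)) : (commonZeros P Q).Finite := by
  have hQ0 : Q ≠ 0 := fun h => hQ 0 (by rw [h, Polynomial.map_zero])
  refine finite_commonZeros_of_finite_fst ?_ hQ
  refine (finite_or_finite_compl_fst_commonZeros P hQ0).resolve_right fun hcof => ?_
  exact NormedSpace.unbounded_univ ℂ ℂ <| by
    simpa using hbdd.union hcof.isBounded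

theorem le_one_add_add_of_sq_le {M A B : ℝ} (hA : 0 ≤ A) (hB : 0 ≤ B)
    (h : M ^ 2 ≤ M + A + B * M) : M ≤ 1 + A + B := by
  by_contra! hlt
  nlinarith [mul_le_mul_of_nonneg_left (show 1 ≤ M by linarith) hA]

theorem norm_le_of_periodic_of_henon_recurrence {a b : ℂ} {x : ℕ → ℂ} {N : ℕ} (hN : 0 < N)
    (hper : Function.Periodic x N) (hrec : ∀ n, x (n + 2) = x (n + 1) ^ 2 + a - b * x n)
    (n : ℕ) : ‖x n‖ ≤ 1 + ‖a‖ + ‖b‖ := by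
  obtain ⟨m, -, hm⟩ := (Finset.range N).exists_max_image (‖x ·‖) ⟨0, Finset.mem_range.2 hN⟩
  have hmax : ∀ k, ‖x k‖ ≤ ‖x m‖ := fun k =>
    hper.map_mod_nat k ▸ hm _ (Finset.mem_range.2 (Nat.mod_lt k hN))
  obtain ⟨j, hj⟩ : ∃ j, m + N = j + 1 := ⟨m + N - 1, by omega⟩
  have hxm : x m = x (j + 1) := by rw [← hj, hper]
  have key : ‖x m‖ ^ 2 ≤ ‖x m‖ + ‖a‖ + ‖b‖ * ‖x m‖ :=
    calc ‖x m‖ ^ 2 = ‖x (j + 2) - a + b * x j‖ := by rw [hxm, ← norm_pow, hrec]; ring_nf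
      _ ≤ ‖x (j + 2)‖ + ‖a‖ + ‖b‖ * ‖x j‖ := by
        grw [norm_add_le, norm_sub_le, norm_mul]
      _ ≤ ‖x m‖ + ‖a‖ + ‖b‖ * ‖x m‖ := by gcongr <;> apply hmax
  exact (hmax n).trans (le_one_add_add_of_sq_le (norm_nonneg _) (norm_nonneg _) key)

theorem norm_fst_le_of_iterate_henonMap_eq_self {a b : ℂ} {N : ℕ} (hN : 0 < N) {p : ℂ × ℂ}
    (hp : (henonMap a b)^[N] p = p) : ‖p.1‖ ≤ 1 + ‖a‖ + ‖b‖ := by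
  refine norm_le_of_periodic_of_henon_recurrence (x := fun n => ((henonMap a b)^[n] p).1)
    hN (fun n => ?_) (fun n => ?_) 0
  · simp only [Function.iterate_add_apply, hp]
  · simp only [Function.iterate_succ_apply']
    rfl

noncomputable def henonPoly (a b : ℂ) : ℕ → ℂ[X][X]
  | 0 => X
  | 1 => C X
  | n + 2 => henonPoly a b (n + 1) ^ 2 + C (C a) - C (C b) * henonPoly a b n

theorem henonMap_iterate_apply (a b x y : ℂ) (n : ℕ) :
    (henonMap a b)^[n] (x, y) =
      ((henonPoly a b (n + 1)).evalEval x y, (henonPoly a b n).evalEval x y) := by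
  induction n with
  | zero => simp [henonPoly, evalEval_C]
  | succ n ih =>
    rw [Function.iterate_succ_apply', ih]
    simp [henonMap, henonPoly, evalEval_C]

theorem setOf_iterate_henonMap_eq_self (a b : ℂ) (N : ℕ) :
    {p | (henonMap a b)^[N] p = p} =
      commonZeros (henonPoly a b N - X) (henonPoly a b (N + 1) - C X) := by
  ext ⟨x, y⟩
  simp [commonZeros, henonMap_iterate_apply, Prod.ext_iff, evalEval_C, sub_eq_zero, and_comm]

theorem natDegree_map_henonPoly (a : ℂ) {b : ℂ} (hb : b ≠ 0) (x : ℂ) (n : ℕ) :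
    ((henonPoly a b (n + 2)).map (evalRingHom x)).natDegree = 2 ^ n := by
  set w := fun m => (henonPoly a b m).map (evalRingHom x)
  have hrec : ∀ m, w (m + 2) = w (m + 1) ^ 2 + (C a - C b * w m) := fun m => by
    simp only [w, henonPoly, Polynomial.map_sub, Polynomial.map_add, Polynomial.map_mul,
      Polynomial.map_pow, Polynomial.map_C, coe_evalRingHom, eval_C]
    ring
  suffices ∀ n, (w (n + 2)).natDegree = 2 ^ n ∧ (w (n + 1)).natDegree ≤ 2 ^ n from (this n).1
  intro n
  induction n with
  | zero =>
    have hw₁ : w 1 = C x := by simp [w, henonPoly]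
    have hw₀ : w 0 = X := by simp [w, henonPoly]
    rw [hrec, hw₁, hw₀, natDegree_C]
    refine ⟨?_, zero_le⟩
    rw [show C x ^ 2 + (C a - C b * X) = C (-b) * X + C (x ^ 2 + a) by
      simp only [map_neg, map_add, map_pow]; ring]
    exact natDegree_linear (neg_ne_zero.2 hb)
  | succ n ih =>
    refine ⟨?_, ih.1.trans_le (Nat.pow_le_pow_right two_pos n.le_succ)⟩
    have hdeg : (C a - C b * w (n + 1)).natDegree < 2 * (w (n + 2)).natDegree :=
      calc (C a - C b * w (n + 1)).natDegree ≤ (w (n + 1)).natDegree :=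
            (natDegree_sub_le _ _).trans (by simp [natDegree_C_mul_le])
        _ ≤ 2 ^ n := ih.2
        _ < 2 * (w (n + 2)).natDegree := by rw [ih.1]; exact lt_two_mul_self (by positivity)
    rw [hrec, natDegree_sq_add hdeg, ih.1, pow_succ, mul_comm]

theorem map_henonPoly_sub_C_X_ne_zero (a : ℂ) {b : ℂ} (hb : b ≠ 0) (x : ℂ) (n : ℕ) :
    (henonPoly a b (n + 2) - C X).map (evalRingHom x) ≠ 0 := by
  rw [Polynomial.map_sub, Polynomial.map_C, coe_evalRingHom, eval_X]
  refine ne_zero_of_natDegree_gt (n := 0) ?_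
  rw [natDegree_sub_C, natDegree_map_henonPoly a hb x n]
  positivity

/-- For `b ≠ 0` and `N ≥ 1`, the set of periodic points of the Hénon map whose
period divides `N` is finite. -/
theorem henon_periodic_points_finite (a b : ℂ) (hb : b ≠ 0) (N : ℕ) (hN : 1 ≤ N) :
    {p : ℂ × ℂ | ((henon a b hb) ^ (N : ℤ)) p = p}.Finite := by
  obtain ⟨n, rfl⟩ : ∃ n, N = n + 1 := ⟨N - 1, by omega⟩
  have hiter : ∀ p, ((henon a b hb) ^ ((n + 1 : ℕ) : ℤ)) p = (henonMap a b)^[n + 1] p :=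
    fun p => by rw [zpow_natCast, ← Equiv.Perm.iterate_eq_pow]; rfl
  simp_rw [hiter, setOf_iterate_henonMap_eq_self]
  refine Complex.finite_commonZeros_of_isBounded (map_henonPoly_sub_C_X_ne_zero a hb · n) ?_
  refine (Metric.isBounded_closedBall (x := 0) (r := 1 + ‖a‖ + ‖b‖)).subset ?_
  rintro _ ⟨p, hp, rfl⟩
  rw [← setOf_iterate_henonMap_eq_self] at hp
  simpa using norm_fst_le_of_iterate_henonMap_eq_self n.succ_pos hp
end
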